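/- Let x ≤ y and x' ≤ y' in \overline{[n]}. If either (x < y' and (x > x' or y > y')), or (x < y' and x = x' ≠ \bar{y'} and y ≤ y'), or (x < y' and y = y' ≠ \bar{x} and x ≤ x'), then H((x,y)⊗(x',y')) := max{ θ_j, θ'_j, η_j, η'_j evaluated at (x,y)⊗(x',y') : j ∈ {1,…,n} } equals 1. -/
import Mathlib


open Classical in
/-- `chi P` is 1 if `P` holds and 0 otherwise. -/
noncomputable def chi (P : Prop) : ℤ := if P then 1 else 0

/-- The involution `x ↦ 2n+1-x` on `{1,…,2n}` (the set `\overline{[n]}`). -/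
def bar (n : ℕ) (x : ℤ) : ℤ := 2 * (n : ℤ) + 1 - x

/-- `θ_j((x,y) ⊗ (x',y'))`. -/
noncomputable def thetaJ (n : ℕ) (j x y x' y' : ℤ) : ℤ :=
  chi (bar n j < x) + chi (bar n j < y) - chi (bar n j < x') - chi (bar n j < y')

/-- `θ'_j((x,y) ⊗ (x',y'))`. -/
noncomputable def thetaJ' (n : ℕ) (j x y x' y' : ℤ) : ℤ :=
  chi (x' < j) + chi (y' < j) - chi (x < j) - chi (y < j)

/-- `η_j((x,y) ⊗ (x',y'))`. -/
noncomputable def etaJ (n : ℕ) (j x y x' y' : ℤ) : ℤ :=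
  chi (bar n j ≤ x) + chi (bar n j ≤ y) - chi (bar n j < x') - chi (bar n j < y')
    - chi (x = j) - chi (y = j)

/-- `η'_j((x,y) ⊗ (x',y'))`. -/
noncomputable def etaJ' (n : ℕ) (j x y x' y' : ℤ) : ℤ :=
  chi (x' ≤ j) + chi (y' ≤ j) - chi (x < j) - chi (y < j)
    - chi (x' = bar n j) - chi (y' = bar n j)

/-- The Kang–Kashiwara–Misra energy
`H((x,y) ⊗ (x',y')) = max {θ_j, θ'_j, η_j, η'_j : j ∈ {1,…,n}}`. -/
noncomputable def Henergy (n : ℕ) (hn : 1 ≤ n) (x y x' y' : ℤ) : ℤ :=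
  (Finset.Icc (1 : ℤ) (n : ℤ)).sup'
    (Finset.nonempty_Icc.mpr (by exact_mod_cast hn))
    (fun j => max (max (thetaJ n j x y x' y') (thetaJ' n j x y x' y'))
                  (max (etaJ n j x y x' y') (etaJ' n j x y x' y')))

/-- The simple formula `H'((x,y) ⊗ (x',y'))`. -/
noncomputable def Hprime (n : ℕ) (x y x' y' : ℤ) : ℤ :=
  if bar n y' ≠ x then
    chi (x' ≤ x) + chi (y' ≤ y) - chi (y' ≤ y ∧ x < y' ∧ x' ≤ x)
  else
    chi (x' < x) + chi (y' < y) - chi (y' < y ∧ x < y' ∧ x' < x)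

lemma one_le_Henergy (n : ℕ) (hn : 1 ≤ n) (x y x' y' j : ℤ)
    (hj : j ∈ Finset.Icc (1 : ℤ) (n : ℤ))
    (h : 1 ≤ max (max (thetaJ n j x y x' y') (thetaJ' n j x y x' y'))
                 (max (etaJ n j x y x' y') (etaJ' n j x y x' y'))) :
    1 ≤ Henergy n hn x y x' y' := by
  unfold Henergy
  exact le_trans h (Finset.le_sup' (fun j => max (max (thetaJ n j x y x' y') (thetaJ' n j x y x' y')) (max (etaJ n j x y x' y') (etaJ' n j x y x' y'))) hj)

/-- in the listed cases the KKM energy `H((x,y)⊗(x',y'))` is 1. -/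
theorem stmt_4 (n : ℕ) (hn : 2 ≤ n) (x y x' y' : ℤ)
    (hx : 1 ≤ x) (hxy : x ≤ y) (hy : y ≤ 2 * (n : ℤ))
    (hx' : 1 ≤ x') (hxy' : x' ≤ y') (hy' : y' ≤ 2 * (n : ℤ))
    (hcase : ((x < y' ∧ (x' < x ∨ y' < y)) ∨ (x < y' ∧ x = x' ∧ x' ≠ bar n y' ∧ y ≤ y') ∨ (x < y' ∧ y = y' ∧ y' ≠ bar n x ∧ x ≤ x'))) :
    Henergy n (by omega) x y x' y' = 1 := by
  
  have hxv : x < y' := by rcases hcase with ⟨h, _⟩ | ⟨h, _⟩ | ⟨h, _⟩ <;> exact h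
  apply le_antisymm
  · apply Finset.sup'_le
    intro j hj
    simp only [Finset.mem_Icc] at hj
    simp only [thetaJ, thetaJ', etaJ, etaJ', chi, bar, max_le_iff]
    refine ⟨⟨?_, ?_⟩, ?_, ?_⟩ <;> split_ifs <;> omega
  · rcases hcase with ⟨h1, h2 | h2⟩ | ⟨h1, h2, h3, h4⟩ | ⟨h1, h2, h3, h4⟩
    · -- x' < x
      rcases le_or_gt x n with hc | hc
      · refine one_le_Henergy n (by omega) x y x' y' x
          (Finset.mem_Icc.mpr (by omega))
          (le_max_of_le_left (le_max_of_le_right ?_))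
        simp only [thetaJ', chi, bar]
        split_ifs <;> omega
      · refine one_le_Henergy n (by omega) x y x' y' (2 * n + 1 - x)
          (Finset.mem_Icc.mpr (by omega))
          (le_max_of_le_right (le_max_of_le_left ?_))
        simp only [etaJ, chi, bar]
        split_ifs <;> omega
    · -- y' < y
      rcases le_or_gt y' n with hc | hc
      · refine one_le_Henergy n (by omega) x y x' y' y'
          (Finset.mem_Icc.mpr (by omega))
          (le_max_of_le_right (le_max_of_le_right ?_))
        simp only [etaJ', chi, bar]
        split_ifs <;> omega
      · refine one_le_Henergy n (by omega) x y x' y' (2 * n + 1 - y')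
          (Finset.mem_Icc.mpr (by omega))
          (le_max_of_le_left (le_max_of_le_left ?_))
        simp only [thetaJ, chi, bar]
        split_ifs <;> omega
    · -- x = x', x' ≠ bar n y', y ≤ y'
      simp only [bar] at h3
      rcases le_or_gt x n with hc | hc
      · refine one_le_Henergy n (by omega) x y x' y' x
          (Finset.mem_Icc.mpr (by omega))
          (le_max_of_le_right (le_max_of_le_right ?_))
        simp only [etaJ', chi, bar]
        split_ifs <;> omega
      · refine one_le_Henergy n (by omega) x y x' y' (2 * n + 1 - x)
          (Finset.mem_Icc.mpr (by omega))
          (le_max_of_le_right (le_max_of_le_left ?_))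
        simp only [etaJ, chi, bar]
        split_ifs <;> omega
    · -- y = y', y' ≠ bar n x, x ≤ x'
      simp only [bar] at h3
      rcases le_or_gt y' n with hc | hc
      · refine one_le_Henergy n (by omega) x y x' y' y'
          (Finset.mem_Icc.mpr (by omega))
          (le_max_of_le_right (le_max_of_le_right ?_))
        simp only [etaJ', chi, bar]
        split_ifs <;> omega
      · refine one_le_Henergy n (by omega) x y x' y' (2 * n + 1 - y')
          (Finset.mem_Icc.mpr (by omega))
          (le_max_of_le_right (le_max_of_le_left ?_))
        simp only [etaJ, chi, bar]
        split_ifs <;> omega
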